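/- Let X₁, X₂, X_c be independent random variables each with density (1/2)e^{-x/2} on (0,∞), let L₁, L₂, L_c, σ² > 0, γ₁, γ₂ ∈ (0,1) with γ₁ + γ₂ = 1, and ε₁ > 0 with γ₁/γ₂ > ε₁. Define V₁,₁ = γ₁L₁X₁/(γ₂L₁X₁ + 2σ²), V₂,₁ = γ₁L₂X₂/(γ₂L₂X₂ + 2σ²), W₁ = L_cX_c/(2σ²), and ξ = σ²ε₁/(γ₁ − ε₁γ₂). Then the outage probability of the weak user in bi-directional cooperative NOMA satisfies P{V₁,₁ < ε₁ and V₂,₁ < ε₁} + P{max{V₁,₁, W₁} < ε₁ and V₂,₁ > ε₁} = (1 − e^{−ξ/L₁})·(1 − e^{−σ²ε₁/L_c − ξ/L₂}). -/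

import Mathlib

/-! Because `γ1 > ε1 γ2`, the SINR `γ1 L x / (γ2 L x + 2σ²)` is below `ε1` exactly when `x` is
below the threshold `2σ² ε1 / (L (γ1 - ε1 γ2)) = 2ξ / L`, and `W1 < ε1` exactly when
`X_c < 2σ² ε1 / L_c`. Both outage events are therefore boxes, the integrals of the product density
factor into one-dimensional exponential integrals, and
`(1 - e^{-ξ/L1}) (1 - e^{-ξ/L2}) + (1 - e^{-ξ/L1}) e^{-ξ/L2} (1 - e^{-σ² ε1/Lc})`
is the claimed product. -/

open Real MeasureTheory Set

/-- Joint density of three independent exponential(mean 2) random variables. -/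
noncomputable def dens3 (p : ℝ × ℝ × ℝ) : ℝ :=
  ((1/2) * Real.exp (-p.1/2)) * ((1/2) * Real.exp (-p.2.1/2)) * ((1/2) * Real.exp (-p.2.2/2))

lemma hasDerivAt_neg_exp_neg_half (x : ℝ) :
    HasDerivAt (fun x : ℝ => -exp (-x / 2)) (1 / 2 * exp (-x / 2)) x :=
  ((hasDerivAt_neg x).div_const 2).exp.fun_neg.congr_deriv (by ring)

lemma integral_Ioo_half_exp_neg_half {a b : ℝ} (hab : a ≤ b) :
    ∫ x in Ioo a b, 1 / 2 * exp (-x / 2) = exp (-a / 2) - exp (-b / 2) := by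
  rw [← integral_Ioc_eq_integral_Ioo, ← intervalIntegral.integral_of_le hab,
    intervalIntegral.integral_eq_sub_of_hasDerivAt (fun x _ => hasDerivAt_neg_exp_neg_half x)
      ((by fun_prop : Continuous fun x : ℝ => 1 / 2 * exp (-x / 2)).intervalIntegrable a b)]
  ring

lemma integral_Ioi_half_exp_neg_half (a : ℝ) :
    ∫ x in Ioi a, 1 / 2 * exp (-x / 2) = exp (-a / 2) := by
  have hlim : Filter.Tendsto (fun x : ℝ => -exp (-x / 2)) Filter.atTop (nhds 0) := by
    simpa using (tendsto_exp_atBot.comp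
      ((Filter.tendsto_neg_atTop_atBot).atBot_div_const two_pos)).neg
  rw [integral_Ioi_of_hasDerivAt_of_nonneg' (fun x _ => hasDerivAt_neg_exp_neg_half x)
    (fun x _ => by positivity) hlim]
  ring

lemma integral_dens3_prod (A B C : Set ℝ) :
    ∫ p in A ×ˢ B ×ˢ C, dens3 p
      = (∫ x in A, 1 / 2 * exp (-x / 2)) * (∫ y in B, 1 / 2 * exp (-y / 2)) *
          ∫ z in C, 1 / 2 * exp (-z / 2) := by
  have hdens : dens3 = fun p => 1 / 2 * exp (-p.1 / 2) *
      (1 / 2 * exp (-p.2.1 / 2) * (1 / 2 * exp (-p.2.2 / 2))) := by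
    ext p
    simp only [dens3]
    ring
  rw [hdens, Measure.volume_eq_prod, setIntegral_prod_mul (fun x : ℝ => 1 / 2 * exp (-x / 2))
      (fun q : ℝ × ℝ => 1 / 2 * exp (-q.1 / 2) * (1 / 2 * exp (-q.2 / 2))),
    Measure.volume_eq_prod, setIntegral_prod_mul (fun x : ℝ => 1 / 2 * exp (-x / 2))
      (fun x : ℝ => 1 / 2 * exp (-x / 2)), mul_assoc]

section Threshold

variable {γ1 γ2 ε n L x : ℝ}

lemma sinr_sub_eq (hL : L ≠ 0) (hk : γ1 - ε * γ2 ≠ 0) :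
    γ1 * L * x - ε * (γ2 * L * x + n) = L * (γ1 - ε * γ2) * (x - n * ε / (L * (γ1 - ε * γ2))) := by
  field_simp
  ring

lemma sinr_lt_iff (hL : 0 < L) (hn : 0 < n) (hγ2 : 0 ≤ γ2) (hk : 0 < γ1 - ε * γ2) (hx : 0 ≤ x) :
    γ1 * L * x / (γ2 * L * x + n) < ε ↔ x < n * ε / (L * (γ1 - ε * γ2)) := by
  rw [div_lt_iff₀ (by positivity), ← sub_pos, ← neg_sub, sinr_sub_eq hL.ne' hk.ne', ← mul_neg,
    neg_sub, mul_pos_iff_of_pos_left (by positivity), sub_pos]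

lemma lt_sinr_iff (hL : 0 < L) (hn : 0 < n) (hγ2 : 0 ≤ γ2) (hk : 0 < γ1 - ε * γ2) (hx : 0 ≤ x) :
    ε < γ1 * L * x / (γ2 * L * x + n) ↔ n * ε / (L * (γ1 - ε * γ2)) < x := by
  rw [lt_div_iff₀ (by positivity), ← sub_pos, sinr_sub_eq hL.ne' hk.ne',
    mul_pos_iff_of_pos_left (by positivity), sub_pos]

end Threshold

lemma mul_div_lt_iff_lt_mul_div {L n z ε : ℝ} (hL : 0 < L) (hn : 0 < n) :
    L * z / n < ε ↔ z < n * ε / L := by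
  rw [div_lt_iff₀ hn, lt_div_iff₀' hL, mul_comm ε]

section OutageRegion

variable {γ1 γ2 ε n L1 L2 Lc : ℝ}

lemma setOf_sinr_lt_and_sinr_lt_eq (hL1 : 0 < L1) (hL2 : 0 < L2) (hn : 0 < n) (hγ2 : 0 ≤ γ2)
    (hk : 0 < γ1 - ε * γ2) :
    {p : ℝ × ℝ × ℝ | 0 < p.1 ∧ 0 < p.2.1 ∧ 0 < p.2.2 ∧
        γ1 * L1 * p.1 / (γ2 * L1 * p.1 + n) < ε ∧
        γ1 * L2 * p.2.1 / (γ2 * L2 * p.2.1 + n) < ε}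
      = Ioo 0 (n * ε / (L1 * (γ1 - ε * γ2))) ×ˢ Ioo 0 (n * ε / (L2 * (γ1 - ε * γ2))) ×ˢ Ioi 0 := by
  ext ⟨x, y, z⟩
  simp only [mem_ofPred_eq, mem_prod, mem_Ioo, mem_Ioi]
  constructor
  · rintro ⟨hx, hy, hz, h1, h2⟩
    exact ⟨⟨hx, (sinr_lt_iff hL1 hn hγ2 hk hx.le).1 h1⟩,
      ⟨hy, (sinr_lt_iff hL2 hn hγ2 hk hy.le).1 h2⟩, hz⟩
  · rintro ⟨⟨hx, h1⟩, ⟨hy, h2⟩, hz⟩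
    exact ⟨hx, hy, hz, (sinr_lt_iff hL1 hn hγ2 hk hx.le).2 h1,
      (sinr_lt_iff hL2 hn hγ2 hk hy.le).2 h2⟩

lemma setOf_max_sinr_lt_and_lt_sinr_eq (hL1 : 0 < L1) (hL2 : 0 < L2) (hLc : 0 < Lc)
    (hn : 0 < n) (hγ2 : 0 ≤ γ2) (hε : 0 ≤ ε) (hk : 0 < γ1 - ε * γ2) :
    {p : ℝ × ℝ × ℝ | 0 < p.1 ∧ 0 < p.2.1 ∧ 0 < p.2.2 ∧
        max (γ1 * L1 * p.1 / (γ2 * L1 * p.1 + n)) (Lc * p.2.2 / n) < ε ∧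
        ε < γ1 * L2 * p.2.1 / (γ2 * L2 * p.2.1 + n)}
      = Ioo 0 (n * ε / (L1 * (γ1 - ε * γ2))) ×ˢ Ioi (n * ε / (L2 * (γ1 - ε * γ2))) ×ˢ
          Ioo 0 (n * ε / Lc) := by
  ext ⟨x, y, z⟩
  simp only [mem_ofPred_eq, mem_prod, mem_Ioo, mem_Ioi, max_lt_iff,
    mul_div_lt_iff_lt_mul_div hLc hn]
  constructor
  · rintro ⟨hx, hy, hz, ⟨h1, hc⟩, h2⟩
    exact ⟨⟨hx, (sinr_lt_iff hL1 hn hγ2 hk hx.le).1 h1⟩,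
      (lt_sinr_iff hL2 hn hγ2 hk hy.le).1 h2, hz, hc⟩
  · rintro ⟨⟨hx, h1⟩, h2, hz, hc⟩
    have hy : 0 < y := lt_of_le_of_lt (by positivity) h2
    exact ⟨hx, hy, hz, ⟨(sinr_lt_iff hL1 hn hγ2 hk hx.le).2 h1, hc⟩,
      (lt_sinr_iff hL2 hn hγ2 hk hy.le).2 h2⟩

end OutageRegion

theorem stmt17_general (L1 L2 Lc σ2 γ1 γ2 ε1 : ℝ) (hL1 : 0 < L1) (hL2 : 0 < L2) (hLc : 0 < Lc)
    (hσ : 0 < σ2) (hγ2 : γ2 ∈ Set.Ioo (0:ℝ) 1)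
    (hε : 0 < ε1) (hth : ε1 < γ1 / γ2) :
    (∫ p in {p : ℝ × ℝ × ℝ | 0 < p.1 ∧ 0 < p.2.1 ∧ 0 < p.2.2 ∧
        γ1 * L1 * p.1 / (γ2 * L1 * p.1 + 2 * σ2) < ε1 ∧
        γ1 * L2 * p.2.1 / (γ2 * L2 * p.2.1 + 2 * σ2) < ε1}, dens3 p)
    + (∫ p in {p : ℝ × ℝ × ℝ | 0 < p.1 ∧ 0 < p.2.1 ∧ 0 < p.2.2 ∧
        max (γ1 * L1 * p.1 / (γ2 * L1 * p.1 + 2 * σ2)) (Lc * p.2.2 / (2 * σ2)) < ε1 ∧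
        ε1 < γ1 * L2 * p.2.1 / (γ2 * L2 * p.2.1 + 2 * σ2)}, dens3 p)
    = (1 - Real.exp (-(σ2 * ε1 / (γ1 - ε1 * γ2)) / L1)) *
      (1 - Real.exp (-(σ2 * ε1) / Lc - (σ2 * ε1 / (γ1 - ε1 * γ2)) / L2)) := by
  have hk : 0 < γ1 - ε1 * γ2 := by
    rw [lt_div_iff₀ hγ2.1] at hth
    linarith
  have hn : (0 : ℝ) < 2 * σ2 := by positivity
  rw [setOf_sinr_lt_and_sinr_lt_eq hL1 hL2 hn hγ2.1.le hk,
    setOf_max_sinr_lt_and_lt_sinr_eq hL1 hL2 hLc hn hγ2.1.le hε.le hk,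
    integral_dens3_prod, integral_dens3_prod, integral_Ioo_half_exp_neg_half (by positivity),
    integral_Ioo_half_exp_neg_half (by positivity), integral_Ioo_half_exp_neg_half (by positivity),
    integral_Ioi_half_exp_neg_half, integral_Ioi_half_exp_neg_half]
  have half_threshold : -(2 * σ2 * ε1 / (L1 * (γ1 - ε1 * γ2))) / 2
      = -(σ2 * ε1 / (γ1 - ε1 * γ2)) / L1 := by
    field_simp
  have sum_half_thresholds : -(σ2 * ε1) / Lc - σ2 * ε1 / (γ1 - ε1 * γ2) / L2
      = -(2 * σ2 * ε1 / Lc) / 2 + -(2 * σ2 * ε1 / (L2 * (γ1 - ε1 * γ2))) / 2 := by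
    field_simp
    ring
  rw [half_threshold, sum_half_thresholds, exp_add]
  simp only [neg_zero, zero_div, exp_zero]
  ring

theorem stmt17 (L1 L2 Lc σ2 γ1 γ2 ε1 : ℝ) (hL1 : 0 < L1) (hL2 : 0 < L2) (hLc : 0 < Lc)
    (hσ : 0 < σ2) (hγ1 : γ1 ∈ Set.Ioo (0:ℝ) 1) (hγ2 : γ2 ∈ Set.Ioo (0:ℝ) 1)
    (hsum : γ1 + γ2 = 1) (hε : 0 < ε1) (hth : ε1 < γ1 / γ2) :
    (∫ p in {p : ℝ × ℝ × ℝ | 0 < p.1 ∧ 0 < p.2.1 ∧ 0 < p.2.2 ∧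
        γ1 * L1 * p.1 / (γ2 * L1 * p.1 + 2 * σ2) < ε1 ∧
        γ1 * L2 * p.2.1 / (γ2 * L2 * p.2.1 + 2 * σ2) < ε1}, dens3 p)
    + (∫ p in {p : ℝ × ℝ × ℝ | 0 < p.1 ∧ 0 < p.2.1 ∧ 0 < p.2.2 ∧
        max (γ1 * L1 * p.1 / (γ2 * L1 * p.1 + 2 * σ2)) (Lc * p.2.2 / (2 * σ2)) < ε1 ∧
        ε1 < γ1 * L2 * p.2.1 / (γ2 * L2 * p.2.1 + 2 * σ2)}, dens3 p)
    = (1 - Real.exp (-(σ2 * ε1 / (γ1 - ε1 * γ2)) / L1)) *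
      (1 - Real.exp (-(σ2 * ε1) / Lc - (σ2 * ε1 / (γ1 - ε1 * γ2)) / L2)) :=
  stmt17_general L1 L2 Lc σ2 γ1 γ2 ε1 hL1 hL2 hLc hσ hγ2 hε hth
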